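/- arXiv:2506.19978 — 3 statements merged into one kernel-verified Lean document; each statement's English description precedes it below -/
import Mathlib

section
/- A function f : ℝ^d → ℝ (d ≥ 1) is quadratic, i.e. there exists a symmetric matrix A ∈ ℝ^{d×d} such that f(ξ) = Aξ·ξ for every ξ ∈ ℝ^d, if and only if the following three conditions hold: (a) 2-homogeneity: f(tξ) = t²f(ξ) for every ξ ∈ ℝ^d and every t ∈ ℝ; (b) parallelogram identity: f(ξ+η) + f(ξ−η) = 2f(ξ) + 2f(η) for every ξ, η ∈ ℝ^d; (c) lower bound: there exists a constant c > 0 such that f(ξ) ≥ −c|ξ|² for every ξ ∈ ℝ^d. -/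
/-!
The polar form `polar f x y = f (x + y) - f x - f y` of a function satisfying the parallelogram
identity satisfies Jensen's equation in `x`, hence is additive in `x`. Homogeneity in `x` is then
Cauchy's functional equation for `t ↦ polar f (t • x) y`, whose solutions bounded below on
`[0, 1]` are linear; the lower bound `f ≥ -c‖·‖²` provides such a bound because
`f (t • x) = t² f x` stays bounded for `t ∈ [0, 1]`. Hence `f` is a quadratic form, and the
quadratic forms on `ℝ^d` are exactly the maps `ξ ↦ Aξ·ξ` with `A` symmetric.
-/

open Set
open QuadraticMap (polar)

theorem eq_zero_of_forall_le_int_mul {a C : ℝ} (h : ∀ n : ℤ, C ≤ n * a) : a = 0 := by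
  by_contra ha
  obtain ⟨n, hn⟩ := exists_int_gt (-C / |a|)
  rw [div_lt_iff₀ (abs_pos.mpr ha)] at hn
  have h₁ := h n
  have h₂ := h (-n)
  push_cast at h₂
  rcases abs_cases a with ⟨hab, _⟩ | ⟨hab, _⟩ <;> rw [hab] at hn <;> linarith

theorem AddMonoidHom.apply_eq_mul_of_bddBelow_Icc (φ : ℝ →+ ℝ) (hφ : BddBelow (φ '' Icc 0 1))
    (t : ℝ) : φ t = t * φ 1 := by
  obtain ⟨C, hC⟩ := hφ
  have hzmul : ∀ (n : ℤ) (s : ℝ), φ (n * s) = n * φ s := fun n s => by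
    simpa only [zsmul_eq_mul] using map_zsmul φ n s
  suffices ∀ n : ℤ, C - |φ 1| ≤ n * (φ t - t * φ 1) by
    linarith [eq_zero_of_forall_le_int_mul this]
  intro n
  have hfract : Int.fract (n * t) ∈ Icc (0 : ℝ) 1 :=
    ⟨Int.fract_nonneg _, (Int.fract_lt_one _).le⟩
  -- `φ` kills the integer part of `n * t` up to the linear term, leaving a point of `[0, 1]`
  have hshift : n * (φ t - t * φ 1) = φ (Int.fract (n * t)) - Int.fract (n * t) * φ 1 := by
    rw [Int.fract, map_sub, hzmul, ← mul_one (⌊_⌋ : ℝ), hzmul]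
    ring
  have hlin : Int.fract (n * t) * φ 1 ≤ |φ 1| := by
    nlinarith [hfract.1, hfract.2, le_abs_self (φ 1), abs_nonneg (φ 1)]
  linarith [hC (mem_image_of_mem φ hfract)]

section Parallelogram

variable {E : Type*} [AddCommGroup E] [Module ℝ E] {f : E → ℝ}

theorem polar_add_left_of_parallelogram
    (hpar : ∀ x y : E, f (x + y) + f (x - y) = 2 * f x + 2 * f y) (x x' y : E) :
    polar f (x + x') y = polar f x y + polar f x' y := by
  have hjensen : ∀ u v, polar f (u + v) y + polar f (u - v) y = 2 * polar f u y := by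
    intro u v
    have h := hpar (u + y) v
    rw [show u + y + v = u + v + y by abel, show u + y - v = u - v + y by abel] at h
    simp only [polar]
    linarith [hpar u v]
  have hzero : polar f 0 y = 0 := by
    have := hpar 0 0
    simp only [polar, zero_add, add_zero, sub_zero] at this ⊢
    linarith
  have hdouble := hjensen ((2 : ℝ)⁻¹ • (x + x')) ((2 : ℝ)⁻¹ • (x + x'))
  have hsplit := hjensen ((2 : ℝ)⁻¹ • (x + x')) ((2 : ℝ)⁻¹ • (x - x'))
  rw [sub_self, hzero, ← two_smul ℝ, smul_inv_smul₀ two_ne_zero] at hdouble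
  rw [show (2 : ℝ)⁻¹ • (x + x') + (2 : ℝ)⁻¹ • (x - x') = x by module,
    show (2 : ℝ)⁻¹ • (x + x') - (2 : ℝ)⁻¹ • (x - x') = x' by module] at hsplit
  linarith

theorem polar_smul_left_of_parallelogram
    (hsmul : ∀ (x : E) (t : ℝ), f (t • x) = t ^ 2 * f x)
    (hpar : ∀ x y : E, f (x + y) + f (x - y) = 2 * f x + 2 * f y)
    (hbdd : ∀ x y : E, BddBelow (f '' segment ℝ x y)) (t : ℝ) (x y : E) :
    polar f (t • x) y = t * polar f x y := by
  let φ : ℝ →+ ℝ := AddMonoidHom.mk' (fun s => polar f (s • x) y) fun a b => by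
    simp only [add_smul]
    exact polar_add_left_of_parallelogram hpar _ _ _
  have hφ : BddBelow (φ '' Icc 0 1) := by
    obtain ⟨C, hC⟩ := hbdd y (x + y)
    refine ⟨C - |f x| - f y, ?_⟩
    rintro _ ⟨s, hs, rfl⟩
    have hmem : s • x + y ∈ segment ℝ y (x + y) := by
      rw [segment_eq_image']
      exact ⟨s, hs, by simp [add_comm]⟩
    have hsq : s ^ 2 * f x ≤ |f x| :=
      calc s ^ 2 * f x ≤ s ^ 2 * |f x| := by gcongr; exact le_abs_self _
        _ ≤ |f x| := mul_le_of_le_one_left (abs_nonneg _) (by nlinarith [hs.1, hs.2])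
    have := hC (mem_image_of_mem f hmem)
    simp only [φ, AddMonoidHom.mk'_apply, polar, hsmul]
    linarith
  simpa [φ] using φ.apply_eq_mul_of_bddBelow_Icc hφ t

theorem exists_quadraticForm_of_parallelogram
    (hsmul : ∀ (x : E) (t : ℝ), f (t • x) = t ^ 2 * f x)
    (hpar : ∀ x y : E, f (x + y) + f (x - y) = 2 * f x + 2 * f y)
    (hbdd : ∀ x y : E, BddBelow (f '' segment ℝ x y)) :
    ∃ Q : QuadraticForm ℝ E, ⇑Q = f :=
  ⟨QuadraticMap.ofPolar f (fun t x => by rw [hsmul, smul_eq_mul, sq])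
    (polar_add_left_of_parallelogram hpar)
    (fun t x y => polar_smul_left_of_parallelogram hsmul hpar hbdd t x y), rfl⟩

end Parallelogram

theorem QuadraticMap.map_add_add_map_sub {R M N : Type*} [CommRing R] [AddCommGroup M]
    [Module R M] [AddCommGroup N] [Module R N] (Q : QuadraticMap R M N) (x y : M) :
    Q (x + y) + Q (x - y) = 2 • Q x + 2 • Q y := by
  rw [sub_eq_add_neg, QuadraticMap.map_add Q x y, QuadraticMap.map_add Q x (-y),
    QuadraticMap.map_neg, QuadraticMap.polar_neg_right]
  abel

theorem QuadraticForm.exists_neg_mul_norm_sq_le {E : Type*} [NormedAddCommGroup E]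
    [NormedSpace ℝ E] [FiniteDimensional ℝ E] (Q : QuadraticForm ℝ E) :
    ∃ c, 0 < c ∧ ∀ x, -c * ‖x‖ ^ 2 ≤ Q x := by
  let B := (QuadraticMap.associated (R := ℝ) Q).toContinuousBilinearMap
  refine ⟨‖B‖ + 1, by positivity, fun x => ?_⟩
  have hB : |Q x| ≤ ‖B‖ * ‖x‖ ^ 2 := by
    rw [← QuadraticMap.associated_eq_self_apply ℝ, sq, ← mul_assoc]
    exact B.le_opNorm₂ x x
  nlinarith [neg_abs_le (Q x), sq_nonneg ‖x‖]

theorem bddBelow_image_segment_of_neg_mul_norm_sq_le {E : Type*} [SeminormedAddCommGroup E]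
    [NormedSpace ℝ E] {f : E → ℝ} {c : ℝ} (hc : 0 ≤ c) (hf : ∀ x, -c * ‖x‖ ^ 2 ≤ f x)
    (x y : E) : BddBelow (f '' segment ℝ x y) := by
  set R := max ‖x‖ ‖y‖
  have hsub : segment ℝ x y ⊆ Metric.closedBall 0 R :=
    (convex_closedBall 0 R).segment_subset (by simp [R]) (by simp [R])
  refine ⟨-c * R ^ 2, ?_⟩
  rintro _ ⟨z, hz, rfl⟩
  have hzR : ‖z‖ ≤ R := by simpa using hsub hz
  have : ‖z‖ ^ 2 ≤ R ^ 2 := pow_le_pow_left₀ (norm_nonneg z) hzR 2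
  nlinarith [hf z]

theorem exists_quadraticForm_eq_iff {E : Type*} [NormedAddCommGroup E] [NormedSpace ℝ E]
    [FiniteDimensional ℝ E] (f : E → ℝ) :
    (∃ Q : QuadraticForm ℝ E, ⇑Q = f) ↔
      ((∀ (x : E) (t : ℝ), f (t • x) = t ^ 2 * f x) ∧
        (∀ x y : E, f (x + y) + f (x - y) = 2 * f x + 2 * f y) ∧
        (∃ c : ℝ, 0 < c ∧ ∀ x : E, f x ≥ -c * ‖x‖ ^ 2)) := by
  constructor
  · rintro ⟨Q, rfl⟩
    refine ⟨fun x t => ?_, fun x y => ?_, Q.exists_neg_mul_norm_sq_le⟩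
    · rw [QuadraticMap.map_smul, smul_eq_mul, sq]
    · simpa only [nsmul_eq_mul, Nat.cast_ofNat] using Q.map_add_add_map_sub x y
  · rintro ⟨hsmul, hpar, c, hc, hf⟩
    exact exists_quadraticForm_of_parallelogram hsmul hpar
      (bddBelow_image_segment_of_neg_mul_norm_sq_le hc.le hf)

theorem exists_isSymm_toBilin_iff {ι R M : Type*} [Fintype ι] [DecidableEq ι] [CommRing R]
    [Invertible (2 : R)] [AddCommGroup M] [Module R M] (b : Module.Basis ι R M) (f : M → R) :
    (∃ A : Matrix ι ι R, A.IsSymm ∧ ∀ x, f x = Matrix.toBilin b A x x) ↔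
      ∃ Q : QuadraticForm R M, ⇑Q = f := by
  constructor
  · rintro ⟨A, -, hA⟩
    exact ⟨(Matrix.toBilin b A).toQuadraticMap, funext fun x => (hA x).symm⟩
  · rintro ⟨Q, rfl⟩
    refine ⟨Q.toMatrix b, Q.isSymm_toMatrix b, fun x => ?_⟩
    show _ = Matrix.toBilin b (LinearMap.BilinForm.toMatrix b (QuadraticMap.associated Q)) x x
    rw [Matrix.toBilin_toMatrix, QuadraticMap.associated_eq_self_apply]

theorem EuclideanSpace.toBilin_basisFun_apply {ι : Type*} [Fintype ι] [DecidableEq ι]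
    (A : Matrix ι ι ℝ) (x y : EuclideanSpace ℝ ι) :
    Matrix.toBilin (EuclideanSpace.basisFun ι ℝ).toBasis A x y =
      ∑ i, (∑ j, A i j * y j) * x i := by
  simp only [Matrix.toBilin_apply, OrthonormalBasis.coe_toBasis_repr_apply,
    EuclideanSpace.basisFun_repr, Finset.sum_mul]
  exact Finset.sum_congr rfl fun i _ => Finset.sum_congr rfl fun j _ => by ring

theorem quadratic_characterisation_general (d : ℕ)
    (f : EuclideanSpace ℝ (Fin d) → ℝ) :
    (∃ A : Matrix (Fin d) (Fin d) ℝ, A.IsSymm ∧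
        ∀ ξ : EuclideanSpace ℝ (Fin d), f ξ = ∑ i, (∑ j, A i j * ξ j) * ξ i) ↔
      ((∀ (ξ : EuclideanSpace ℝ (Fin d)) (t : ℝ), f (t • ξ) = t ^ 2 * f ξ) ∧
        (∀ ξ η : EuclideanSpace ℝ (Fin d),
            f (ξ + η) + f (ξ - η) = 2 * f ξ + 2 * f η) ∧
        (∃ c : ℝ, 0 < c ∧ ∀ ξ : EuclideanSpace ℝ (Fin d), f ξ ≥ -c * ‖ξ‖ ^ 2)) := by
  simp_rw [← EuclideanSpace.toBilin_basisFun_apply]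
  rw [exists_isSymm_toBilin_iff]
  exact exists_quadraticForm_eq_iff f

/-- Characterisation of quadratic functions on `ℝ^d`: `f` is of the form
    `ξ ↦ Aξ·ξ` for a symmetric matrix `A` iff it is 2-homogeneous, satisfies the
    parallelogram identity, and is bounded below by `-c|ξ|²` for some `c > 0`. -/
theorem quadratic_characterisation (d : ℕ) (hd : 1 ≤ d)
    (f : EuclideanSpace ℝ (Fin d) → ℝ) :
    (∃ A : Matrix (Fin d) (Fin d) ℝ, A.IsSymm ∧
        ∀ ξ : EuclideanSpace ℝ (Fin d), f ξ = ∑ i, (∑ j, A i j * ξ j) * ξ i) ↔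
      ((∀ (ξ : EuclideanSpace ℝ (Fin d)) (t : ℝ), f (t • ξ) = t ^ 2 * f ξ) ∧
        (∀ ξ η : EuclideanSpace ℝ (Fin d),
            f (ξ + η) + f (ξ - η) = 2 * f ξ + 2 * f η) ∧
        (∃ c : ℝ, 0 < c ∧ ∀ ξ : EuclideanSpace ℝ (Fin d), f ξ ≥ -c * ‖ξ‖ ^ 2)) :=
  quadratic_characterisation_general d f
end

section
/- Let I = [a,b] ⊂ ℝ be a bounded closed interval, let (X, ‖·‖) be a Banach space, and let f : ℝ → X be a Bochner integrable function with f = 0 on ℝ \ I. For z ∈ I, k ∈ ℕ, and i ∈ ℤ set t_i^k := z + i/k. Then there exist an infinite subset K ⊆ ℕ and an ℒ¹-negligible set N ⊆ I such that for every z ∈ I \ N one has lim_{k→+∞, k∈K} Σ_{i∈ℤ} ∫_{t_i^k}^{t_{i+1}^k} ‖f(t_i^k) − f(t)‖ dt = 0. -/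
open MeasureTheory Filter Set
open scoped Topology ENNReal

/-!
Let `Φₖ(z) = ∑ᵢ ∫_{tᵢ}^{tᵢ₊₁} ‖f(tᵢ) - f(t)‖ dt` (`riemannDefect f k z`). Substituting
`t = tᵢ + s` and integrating over `z ∈ [a, b]`, Tonelli gives
`∫_a^b Φₖ ≤ (k (b - a) + 1) ∫_0^{1/k} ‖f - f(· + s)‖₁ ds`, since a point `y` is of the form
`z + i/k` with `z ∈ [a, b]` for at most `k (b - a) + 1` indices `i`. Continuity of translation
in `L¹` makes the right-hand side tend to `0`, so `Φₖ → 0` in `L¹[a, b]`, and a subsequence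
along which the integrals are summable converges to `0` almost everywhere.
-/

theorem StrictMono.atTop_inf_principal_range {φ : ℕ → ℕ} (hφ : StrictMono φ) :
    atTop ⊓ 𝓟 (range φ) = map φ atTop := by
  calc atTop ⊓ 𝓟 (range φ) = map φ (comap φ (atTop ⊓ 𝓟 (range φ))) :=
        (map_comap_of_mem (mem_inf_of_right (mem_principal_self _))).symm
    _ = map φ atTop := by
        rw [comap_inf_principal_range, comap_embedding_atTop (fun _ _ => hφ.le_iff_le)
          fun c => ⟨c, hφ.id_le c⟩]

theorem exists_strictMono_ae_tendsto_zero_of_tendsto_lintegral {α : Type*} [MeasurableSpace α]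
    {μ : Measure α} {F : ℕ → α → ℝ≥0∞} (hF : ∀ n, AEMeasurable (F n) μ)
    (h : Tendsto (fun n => ∫⁻ x, F n x ∂μ) atTop (𝓝 0)) :
    ∃ φ : ℕ → ℕ, StrictMono φ ∧ ∀ᵐ x ∂μ, Tendsto (fun n => F (φ n) x) atTop (𝓝 0) := by
  obtain ⟨φ, hφ, hsmall⟩ := extraction_forall_of_eventually fun n =>
    h.eventually (gt_mem_nhds (ENNReal.pow_pos (by norm_num : (0 : ℝ≥0∞) < 2⁻¹) n))
  refine ⟨φ, hφ, ?_⟩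
  have hsum : ∫⁻ x, ∑' n, F (φ n) x ∂μ ≠ ∞ := by
    rw [lintegral_tsum fun n => hF _]
    refine ne_top_of_le_ne_top ?_ (ENNReal.tsum_le_tsum fun n => (hsmall n).le)
    simp [ENNReal.tsum_geometric]
  filter_upwards [ae_lt_top' (AEMeasurable.tsum fun n => hF (φ n)) hsum] with x hx
  exact ENNReal.tendsto_atTop_zero_of_tsum_ne_top hx.ne

theorem tendsto_mul_setLIntegral_Ioc_zero_one_div {ω : ℝ → ℝ≥0∞}
    (hω : Tendsto ω (𝓝[>] 0) (𝓝 0)) (L : ℝ) :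
    Tendsto (fun k : ℕ => (ENNReal.ofReal (k * L) + 1) * ∫⁻ s in Ioc (0 : ℝ) (1 / k), ω s)
      atTop (𝓝 0) := by
  set C := ENNReal.ofReal L + 1
  rw [ENNReal.tendsto_nhds_zero]
  intro ε hε
  have hεC : 0 < ε / C := ENNReal.div_pos hε.ne' (by finiteness)
  obtain ⟨δ, hδ, hωδ⟩ := mem_nhdsGT_iff_exists_Ioo_subset.mp (hω.eventually (ge_mem_nhds hεC))
  filter_upwards [eventually_gt_atTop 0,
    tendsto_one_div_atTop_nhds_zero_nat.eventually (gt_mem_nhds (mem_Ioi.mp hδ))] with k hk hkδ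
  have hk' : (0 : ℝ) < k := Nat.cast_pos.mpr hk
  calc (ENNReal.ofReal (k * L) + 1) * ∫⁻ s in Ioc (0 : ℝ) (1 / k), ω s
      ≤ (ENNReal.ofReal (k * L) + 1) * (ENNReal.ofReal (1 / k) * (ε / C)) := by
        gcongr
        calc ∫⁻ s in Ioc (0 : ℝ) (1 / k), ω s ≤ ∫⁻ _ in Ioc (0 : ℝ) (1 / k), ε / C :=
              setLIntegral_mono' measurableSet_Ioc fun s hs => hωδ ⟨hs.1, hs.2.trans_lt hkδ⟩
          _ = ENNReal.ofReal (1 / k) * (ε / C) := by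
              rw [setLIntegral_const, Real.volume_Ioc, sub_zero, mul_comm]
    _ = (ENNReal.ofReal L + ENNReal.ofReal (1 / k)) * (ε / C) := by
        rw [← mul_assoc, add_mul, one_mul, ← ENNReal.ofReal_mul' (by positivity)]
        field_simp
    _ ≤ C * (ε / C) :=
        mul_le_mul_left (add_le_add_right (ENNReal.ofReal_le_one.mpr
          ((div_le_one hk').mpr (Nat.one_le_cast.mpr hk))) _) _
    _ = ε := ENNReal.mul_div_cancel (by positivity) (by finiteness)

theorem Int.card_Icc_ceil_floor_le (x y : ℝ) :
    ((Finset.Icc ⌈x⌉ ⌊y⌋).card : ℝ≥0∞) ≤ ENNReal.ofReal (y - x) + 1 := by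
  rw [Int.card_Icc, ← ENNReal.ofReal_natCast, ← Int.cast_natCast, Int.toNat_eq_max]
  calc ENNReal.ofReal ((max (⌊y⌋ + 1 - ⌈x⌉) 0 : ℤ) : ℝ)
      = ENNReal.ofReal (⌊y⌋ + 1 - ⌈x⌉ : ℤ) := by push_cast; simp
    _ ≤ ENNReal.ofReal (y - x + 1) := by
        gcongr
        push_cast
        linarith [Int.floor_le y, Int.le_ceil x]
    _ ≤ ENNReal.ofReal (y - x) + 1 := by
        simpa using ENNReal.ofReal_add_le (p := y - x) (q := 1)

theorem tsum_indicator_Icc_add_div_le (a b y : ℝ) {k : ℕ} (hk : 0 < k) :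
    ∑' i : ℤ, (Icc (a + i / k) (b + i / k)).indicator 1 y ≤
      ENNReal.ofReal (k * (b - a)) + 1 := by
  have hk' : (0 : ℝ) < k := Nat.cast_pos.mpr hk
  have hmem : ∀ i : ℤ, y ∈ Icc (a + i / k) (b + i / k) ↔
      i ∈ (Finset.Icc ⌈k * (y - b)⌉ ⌊k * (y - a)⌋ : Set ℤ) := fun i => by
    have h₁ : a + i / k ≤ y ↔ (i : ℝ) ≤ k * (y - a) := by
      rw [← le_sub_iff_add_le', div_le_iff₀' hk']
    have h₂ : y ≤ b + i / k ↔ k * (y - b) ≤ i := by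
      rw [← sub_le_iff_le_add', le_div_iff₀' hk']
    simp only [mem_Icc, Finset.coe_Icc, Int.ceil_le, Int.le_floor, h₁, h₂, and_comm]
  calc ∑' i : ℤ, (Icc (a + i / k) (b + i / k)).indicator 1 y
      = ∑' i : ℤ, (Finset.Icc ⌈k * (y - b)⌉ ⌊k * (y - a)⌋ : Set ℤ).indicator 1 i :=
        tsum_congr fun i => by simp only [indicator, hmem, Pi.one_apply]
    _ = ((Finset.Icc ⌈k * (y - b)⌉ ⌊k * (y - a)⌋).card : ℝ≥0∞) := by
        rw [← tsum_subtype]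
        simp
    _ ≤ ENNReal.ofReal (k * (b - a)) + 1 := by
        convert Int.card_Icc_ceil_floor_le _ _ using 3
        ring

theorem setLIntegral_Icc_comp_add (h : ℝ → ℝ≥0∞) (a b c : ℝ) :
    ∫⁻ z in Icc a b, h (z + c) = ∫⁻ y in Icc (a + c) (b + c), h y := by
  rw [(measurePreserving_add_right volume c).setLIntegral_comp_emb
    (MeasurableEquiv.addRight c).measurableEmbedding, image_add_const_Icc]

theorem tsum_setLIntegral_Icc_comp_add_div_le {h : ℝ → ℝ≥0∞} (hh : AEMeasurable h) (a b : ℝ)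
    {k : ℕ} (hk : 0 < k) :
    ∑' i : ℤ, ∫⁻ z in Icc a b, h (z + i / k) ≤
      (ENNReal.ofReal (k * (b - a)) + 1) * ∫⁻ y, h y := by
  calc ∑' i : ℤ, ∫⁻ z in Icc a b, h (z + i / k)
      = ∑' i : ℤ, ∫⁻ y, (Icc (a + i / k) (b + i / k)).indicator 1 y * h y := by
        simp_rw [setLIntegral_Icc_comp_add, ← lintegral_indicator measurableSet_Icc,
          ← indicator_mul_left, Pi.one_apply, one_mul]
    _ = ∫⁻ y, ∑' i : ℤ, (Icc (a + i / k) (b + i / k)).indicator 1 y * h y :=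
        (lintegral_tsum fun _ => (aemeasurable_one.indicator measurableSet_Icc).mul hh).symm
    _ = ∫⁻ y, (∑' i : ℤ, (Icc (a + i / k) (b + i / k)).indicator 1 y) * h y := by
        simp_rw [ENNReal.tsum_mul_right]
    _ ≤ ∫⁻ y, (ENNReal.ofReal (k * (b - a)) + 1) * h y :=
        lintegral_mono fun y => mul_le_mul_left (tsum_indicator_Icc_add_div_le a b y hk) _
    _ = (ENNReal.ofReal (k * (b - a)) + 1) * ∫⁻ y, h y :=
        lintegral_const_mul' _ _ (by finiteness)

section Translation

variable {X : Type*} [NormedAddCommGroup X] {f : ℝ → X}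

theorem tendsto_lintegral_enorm_sub_comp_add_zero (hf : Integrable f) :
    Tendsto (fun s => ∫⁻ y, ‖f y - f (y + s)‖ₑ) (𝓝 0) (𝓝 0) := by
  have : Fact ((1 : ℝ≥0∞) ≤ 1) := ⟨le_rfl⟩
  let T : C(ℝ, C(ℝ, ℝ)) := ContinuousMap.curry ⟨fun p : ℝ × ℝ => p.2 + p.1, by fun_prop⟩
  have hT : ∀ s, MeasurePreserving (T s) volume volume := fun s =>
    measurePreserving_add_right volume s
  have hF := memLp_one_iff_integrable.mpr hf
  have hLp := (tendsto_const_nhds (x := hF.toLp f)).compMeasurePreservingLp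
    (T.continuous.tendsto 0) hT (hT 0) ENNReal.one_ne_top
  simp only [Lp.toLp_compMeasurePreserving] at hLp
  rw [Lp.tendsto_Lp_iff_tendsto_eLpNorm''] at hLp
  simpa [T, Function.comp_def, eLpNorm_one_eq_lintegral_enorm, enorm_sub_rev] using hLp

theorem aemeasurable_enorm_sub_comp_add_prod (hf : AEStronglyMeasurable f) (c : ℝ)
    (s t : Set ℝ) :
    AEMeasurable (fun p : ℝ × ℝ => ‖f (p.1 + c) - f (p.1 + c + p.2)‖ₑ)
      ((volume.restrict s).prod (volume.restrict t)) := by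
  have h :=
    (hf.comp_fst.sub (hf.comp_quasiMeasurePreserving (quasiMeasurePreserving_add _ _))).enorm
  rw [Measure.prod_restrict]
  exact (h.comp_quasiMeasurePreserving ((measurePreserving_add_right volume c).prod
    (.id volume)).quasiMeasurePreserving).restrict

end Translation

/-- Computed in `ℝ≥0∞`, so that Tonelli applies; the real series of the theorem is its `toReal`
wherever it is finite. -/
noncomputable def riemannDefect {X : Type*} [NormedAddCommGroup X] (f : ℝ → X) (k : ℕ) (z : ℝ) :
    ℝ≥0∞ :=
  ∑' i : ℤ, ∫⁻ t in Ioc (z + i / k) (z + (i + 1) / k), ‖f (z + i / k) - f t‖ₑ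

section RiemannDefect

variable {X : Type*} [NormedAddCommGroup X] {f : ℝ → X}

theorem riemannDefect_eq (f : ℝ → X) (k : ℕ) (z : ℝ) :
    riemannDefect f k z =
      ∑' i : ℤ, ∫⁻ s in Ioc (0 : ℝ) (1 / k), ‖f (z + i / k) - f (z + i / k + s)‖ₑ := by
  refine tsum_congr fun i => ?_
  have := (measurePreserving_add_left volume (z + i / k)).setLIntegral_comp_emb
    (MeasurableEquiv.addLeft _).measurableEmbedding (fun t => ‖f (z + i / k) - f t‖ₑ)
    (Ioc 0 (1 / k))
  rw [this, image_const_add_Ioc, add_zero, add_assoc, ← add_div]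

theorem aemeasurable_riemannDefect (hf : AEStronglyMeasurable f) (k : ℕ) (s : Set ℝ) :
    AEMeasurable (riemannDefect f k) (volume.restrict s) := by
  rw [funext (riemannDefect_eq f k)]
  exact AEMeasurable.tsum fun i =>
    (aemeasurable_enorm_sub_comp_add_prod hf _ s (Ioc 0 (1 / k))).lintegral_prod_right'

theorem setLIntegral_riemannDefect_le (hf : AEStronglyMeasurable f) (a b : ℝ) {k : ℕ}
    (hk : 0 < k) :
    ∫⁻ z in Icc a b, riemannDefect f k z ≤
      (ENNReal.ofReal (k * (b - a)) + 1) *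
        ∫⁻ s in Ioc (0 : ℝ) (1 / k), ∫⁻ y, ‖f y - f (y + s)‖ₑ := by
  have hF (i : ℤ) := aemeasurable_enorm_sub_comp_add_prod hf (i / k) (Icc a b) (Ioc 0 (1 / k))
  calc ∫⁻ z in Icc a b, riemannDefect f k z
      = ∑' i : ℤ, ∫⁻ z in Icc a b, ∫⁻ s in Ioc (0 : ℝ) (1 / k),
          ‖f (z + i / k) - f (z + i / k + s)‖ₑ := by
        simp_rw [riemannDefect_eq]
        exact lintegral_tsum fun i => (hF i).lintegral_prod_right'
    _ = ∑' i : ℤ, ∫⁻ s in Ioc (0 : ℝ) (1 / k), ∫⁻ z in Icc a b,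
          ‖f (z + i / k) - f (z + i / k + s)‖ₑ :=
        tsum_congr fun i => lintegral_lintegral_swap (hF i)
    _ = ∫⁻ s in Ioc (0 : ℝ) (1 / k), ∑' i : ℤ, ∫⁻ z in Icc a b,
          ‖f (z + i / k) - f (z + i / k + s)‖ₑ :=
        (lintegral_tsum fun i => (hF i).lintegral_prod_left').symm
    _ ≤ ∫⁻ s in Ioc (0 : ℝ) (1 / k),
          (ENNReal.ofReal (k * (b - a)) + 1) * ∫⁻ y, ‖f y - f (y + s)‖ₑ :=
        lintegral_mono fun s =>
          tsum_setLIntegral_Icc_comp_add_div_le (h := fun y => ‖f y - f (y + s)‖ₑ)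
            (hf.sub (hf.comp_quasiMeasurePreserving
              (measurePreserving_add_right volume s).quasiMeasurePreserving)).enorm a b hk
    _ = (ENNReal.ofReal (k * (b - a)) + 1) *
          ∫⁻ s in Ioc (0 : ℝ) (1 / k), ∫⁻ y, ‖f y - f (y + s)‖ₑ :=
        lintegral_const_mul' _ _ (by finiteness)

theorem tendsto_setLIntegral_riemannDefect (hf : Integrable f) (a b : ℝ) :
    Tendsto (fun k => ∫⁻ z in Icc a b, riemannDefect f k z) atTop (𝓝 0) :=
  tendsto_of_tendsto_of_tendsto_of_le_of_le' tendsto_const_nhds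
    (tendsto_mul_setLIntegral_Ioc_zero_one_div
      ((tendsto_lintegral_enorm_sub_comp_add_zero hf).mono_left nhdsWithin_le_nhds) (b - a))
    (.of_forall fun _ => zero_le)
    ((eventually_gt_atTop 0).mono fun _ hk => setLIntegral_riemannDefect_le hf.1 a b hk)

theorem tsum_intervalIntegral_eq_toReal_riemannDefect (hf : AEStronglyMeasurable f) (k : ℕ)
    (z : ℝ) (h : riemannDefect f k z ≠ ∞) :
    ∑' i : ℤ, ∫ t in (z + i / k)..(z + (i + 1) / k), ‖f (z + i / k) - f t‖ =
      (riemannDefect f k z).toReal := by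
  rw [riemannDefect, ENNReal.tsum_toReal_eq fun i => ne_top_of_le_ne_top h (ENNReal.le_tsum i)]
  refine tsum_congr fun i => ?_
  rw [intervalIntegral.integral_of_le (by gcongr; linarith)]
  exact integral_norm_eq_lintegral_enorm (aestronglyMeasurable_const.sub hf).restrict

theorem tendsto_tsum_intervalIntegral_of_tendsto_riemannDefect {l : Filter ℕ}
    (hf : AEStronglyMeasurable f) (z : ℝ) (h : Tendsto (fun k => riemannDefect f k z) l (𝓝 0)) :
    Tendsto (fun k : ℕ => ∑' i : ℤ, ∫ t in (z + i / k)..(z + (i + 1) / k), ‖f (z + i / k) - f t‖)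
      l (𝓝 0) := by
  have hreal := (ENNReal.tendsto_toReal ENNReal.zero_ne_top).comp h
  rw [ENNReal.toReal_zero] at hreal
  refine hreal.congr' ?_
  filter_upwards [h.eventually (gt_mem_nhds ENNReal.zero_lt_top)] with k hk
  exact (tsum_intervalIntegral_eq_toReal_riemannDefect hf k z hk.ne).symm

end RiemannDefect

theorem riemann_sums_ae_general (X : Type*) [NormedAddCommGroup X] (a b : ℝ) (f : ℝ → X)
    (hf : Integrable f) :
    ∃ K : Set ℕ, K.Infinite ∧ ∃ N ⊆ Set.Icc a b, volume N = 0 ∧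
      ∀ z ∈ Set.Icc a b \ N,
        Tendsto
          (fun k : ℕ => ∑' i : ℤ,
            ∫ t in (z + (i : ℝ) / k)..(z + ((i : ℝ) + 1) / k),
              ‖f (z + (i : ℝ) / k) - f t‖)
          (atTop ⊓ 𝓟 K) (𝓝 0) := by
  obtain ⟨φ, hφ, hae⟩ := exists_strictMono_ae_tendsto_zero_of_tendsto_lintegral
    (fun k => aemeasurable_riemannDefect hf.1 k (Icc a b))
    (tendsto_setLIntegral_riemannDefect hf a b)
  rw [ae_restrict_iff' measurableSet_Icc] at hae
  refine ⟨range φ, infinite_range_of_injective hφ.injective,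
    {z ∈ Icc a b | ¬ Tendsto (fun n => riemannDefect f (φ n) z) atTop (𝓝 0)}, sep_subset _ _,
    by simpa only [Classical.not_imp] using ae_iff.mp hae, ?_⟩
  rintro z ⟨hz, hzN⟩
  refine tendsto_tsum_intervalIntegral_of_tendsto_riemannDefect hf.1 z ?_
  rw [hφ.atTop_inf_principal_range, tendsto_map'_iff]
  exact not_not.mp fun h => hzN ⟨hz, h⟩

/-- Approximation by Riemann sums: for a Bochner integrable `f : ℝ → X` vanishing
    outside `[a,b]`, there are an infinite set `K ⊆ ℕ` and a Lebesgue-null set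
    `N ⊆ [a,b]` such that for every `z ∈ [a,b] \ N`, setting `tᵏᵢ = z + i/k`,
    `∑_{i ∈ ℤ} ∫_{tᵏᵢ}^{tᵏᵢ₊₁} ‖f(tᵏᵢ) − f(t)‖ dt → 0` as `k → ∞` along `K`. -/
theorem riemann_sums_ae (X : Type*) [NormedAddCommGroup X] [NormedSpace ℝ X]
    [CompleteSpace X] (a b : ℝ) (hab : a ≤ b) (f : ℝ → X)
    (hf : Integrable f) (hf0 : ∀ t ∉ Set.Icc a b, f t = 0) :
    ∃ K : Set ℕ, K.Infinite ∧ ∃ N ⊆ Set.Icc a b, volume N = 0 ∧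
      ∀ z ∈ Set.Icc a b \ N,
        Tendsto
          (fun k : ℕ => ∑' i : ℤ,
            ∫ t in (z + (i : ℝ) / k)..(z + ((i : ℝ) + 1) / k),
              ‖f (z + (i : ℝ) / k) - f t‖)
          (atTop ⊓ 𝓟 K) (𝓝 0) :=
  riemann_sums_ae_general X a b f hf
end

section
/- Let I = [a,b] and J = [c,d] be bounded closed intervals of ℝ, let (X, ‖·‖) be a Banach space, and let f_k : ℝ × ℝ → X be a sequence of Bochner integrable functions with f_k = 0 on (ℝ×ℝ) \ (I×J). For z₁ ∈ I, k ∈ ℕ, and i ∈ ℤ set t_i^k := z₁ + i/k. Assume that (i) lim_{k→+∞} f_k(t, z₂) = 0 for ℒ¹-a.e. t ∈ I and ℒ¹-a.e. z₂ ∈ J, and (ii) there exists an integrable function g : ℝ → [0,+∞) such that ‖f_k(t, z₂)‖ ≤ g(t) for ℒ¹-a.e. t ∈ I, ℒ¹-a.e. z₂ ∈ J, and every k ∈ ℕ. Then there exist an ℒ²-negligible set N ⊆ I×J and an infinite subset K ⊆ ℕ such that for every (z₁, z₂) ∈ (I×J) \ N one has lim_{k→+∞, k∈K} (1/k) Σ_{i∈ℤ}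 ‖f_k(t_i^k, z₂)‖ = 0. Moreover, for every ε > 0 there exists a Borel set A_ε ⊆ I×J with ℒ²((I×J) \ A_ε) ≤ ε such that this limit holds uniformly for (z₁, z₂) ∈ A_ε. -/
/-!
For `φ ≥ 0` and `T > 0` the periodization `x ↦ ∑ᵢ φ (x + i T)` integrates over any window of
length `T` to `∫ φ`. Applied in the first variable with `T = 1/k`, this bounds the `L¹(I × J)`
norm of the Riemann sums `(1/k) ∑ᵢ ‖f_k (z₁ + i/k, z₂)‖` by `(b - a + 1) ∫ ‖f_k‖`, which tends to
`0` by dominated convergence (applied first in `z₂`, then in `t`). So the Riemann sums tend to `0`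
in measure on `I × J`; a subsequence converges almost everywhere, which gives `K` and `N`, and
Egorov's theorem gives the sets `A_ε`. That `f_k` is only almost everywhere strongly measurable
is harmless: translations preserve Lebesgue null sets, so sampling on `z₁ + ℤ/k` sees a
measurable version of `f_k` for almost every `(z₁, z₂)`.
-/

open MeasureTheory Filter
open scoped Topology

open Set
open scoped ENNReal

theorem StrictMono.map_atTop_eq_inf_principal_range {ns : ℕ → ℕ} (hns : StrictMono ns) :
    map ns atTop = atTop ⊓ 𝓟 (range ns) := by
  rw [← map_comap, comap_embedding_atTop (fun _ _ => hns.le_iff_le) fun n => ⟨n, hns.id_le n⟩]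

theorem MeasureTheory.TendstoInMeasure.exists_infinite_tendsto_ae_tendstoUniformlyOn
    {α E : Type*} [MeasurableSpace α] [MetricSpace E] {μ : Measure α} {s : Set α}
    (hs : MeasurableSet s) (hμs : μ s ≠ ∞) {F : ℕ → α → E} {g : α → E}
    (hF : ∀ k, AEStronglyMeasurable (F k) (μ.restrict s)) (hg : StronglyMeasurable g)
    (hFg : TendstoInMeasure (μ.restrict s) F atTop g) :
    ∃ N ⊆ s, μ N = 0 ∧ ∃ K : Set ℕ, K.Infinite ∧
      (∀ p ∈ s \ N, Tendsto (fun k => F k p) (atTop ⊓ 𝓟 K) (𝓝 (g p))) ∧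
      ∀ ε : ℝ, 0 < ε → ∃ A ⊆ s, MeasurableSet A ∧ μ (s \ A) ≤ ENNReal.ofReal ε ∧
        TendstoUniformlyOn F g (atTop ⊓ 𝓟 K) A := by
  obtain ⟨ns, hns, hae⟩ := hFg.exists_seq_tendsto_ae
  set F' := fun k => (hF k).mk (F k)
  set good : Set α := {p | (∀ k, F k p = F' k p) ∧ Tendsto (fun i => F (ns i) p) atTop (𝓝 (g p))}
  have hgood : ∀ᵐ p ∂μ.restrict s, p ∈ good :=
    (ae_all_iff.2 fun k => (hF k).ae_eq_mk).and hae
  -- a measurable null set off which `F = F'` and the subsequence converges, so that Egorov's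
  -- theorem can be run on `s \ Z` with the strongly measurable `F'`
  set Z := toMeasurable (μ.restrict s) goodᶜ
  have hZ : MeasurableSet Z := measurableSet_toMeasurable _ _
  have hZs : μ (Z ∩ s) = 0 := by
    rw [← Measure.restrict_apply hZ, measure_toMeasurable]
    exact hgood
  have hgood_of_notMem : ∀ p ∉ Z, p ∈ good := fun p hp =>
    not_not.1 fun h => hp (subset_toMeasurable _ _ h)
  have hmap := hns.map_atTop_eq_inf_principal_range
  refine ⟨Z ∩ s, inter_subset_right, hZs, range ns, infinite_range_of_injective hns.injective,
    ?_, ?_⟩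
  · rintro p ⟨hps, hpN⟩
    rw [← hmap, tendsto_map'_iff]
    exact (hgood_of_notMem p fun hpZ => hpN ⟨hpZ, hps⟩).2
  · intro ε hε
    have hlim : ∀ p ∈ s \ Z, Tendsto (fun i => F' (ns i) p) atTop (𝓝 (g p)) := fun p hp =>
      (hgood_of_notMem p hp.2).2.congr fun i => (hgood_of_notMem p hp.2).1 _
    obtain ⟨t, -, ht, hμt, hunif⟩ := tendstoUniformlyOn_of_ae_tendsto
      (fun i => (hF (ns i)).stronglyMeasurable_mk) hg (hs.diff hZ)
      (measure_ne_top_of_subset sdiff_subset hμs) (ae_of_all _ hlim) hε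
    refine ⟨(s \ Z) \ t, sdiff_subset.trans sdiff_subset, (hs.diff hZ).diff ht, ?_, ?_⟩
    · calc μ (s \ ((s \ Z) \ t)) ≤ μ (Z ∩ s ∪ t) := measure_mono fun p hp => by
            simp only [Set.mem_sdiff, mem_union, mem_inter_iff] at hp ⊢; tauto
        _ ≤ μ (Z ∩ s) + μ t := measure_union_le _ _
        _ ≤ ENNReal.ofReal ε := by rw [hZs, zero_add]; exact hμt
    · rw [← hmap]
      refine fun u hu => eventually_map.2 ?_
      refine (hunif.congr (Eventually.of_forall fun i p hp => ?_)) u hu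
      exact ((hgood_of_notMem p hp.1.2).1 (ns i)).symm

theorem tendsto_lintegral_enorm_prod_of_ae_ae {α β E : Type*} [MeasurableSpace α]
    [MeasurableSpace β] [NormedAddCommGroup E] {μ : Measure α} {ν : Measure β} [SFinite ν]
    [IsFiniteMeasure ν] {F : ℕ → α × β → E} (hF : ∀ k, AEStronglyMeasurable (F k) (μ.prod ν))
    (hlim : ∀ᵐ x ∂μ, ∀ᵐ y ∂ν, Tendsto (fun k => F k (x, y)) atTop (𝓝 0))
    {g : α → ℝ} (hg : Integrable g μ) (hdom : ∀ᵐ x ∂μ, ∀ᵐ y ∂ν, ∀ k, ‖F k (x, y)‖ ≤ g x) :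
    Tendsto (fun k => ∫⁻ p, ‖F k p‖ₑ ∂μ.prod ν) atTop (𝓝 0) := by
  have hsection : ∀ᵐ x ∂μ, ∀ k, AEStronglyMeasurable (fun y => F k (x, y)) ν :=
    ae_all_iff.2 fun k => (hF k).prodMk_left
  have hdom' : ∀ᵐ x ∂μ, ∀ᵐ y ∂ν, ∀ k, ‖F k (x, y)‖ₑ ≤ ENNReal.ofReal (g x) :=
    hdom.mono fun x hx => hx.mono fun y hy k => by
      rw [← ofReal_norm]; exact ENNReal.ofReal_le_ofReal (hy k)
  have hinner : ∀ᵐ x ∂μ, Tendsto (fun k => ∫⁻ y, ‖F k (x, y)‖ₑ ∂ν) atTop (𝓝 0) := by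
    filter_upwards [hsection, hlim, hdom'] with x hxm hxlim hxdom
    simpa using tendsto_lintegral_of_dominated_convergence' (f := 0)
      (fun _ => ENNReal.ofReal (g x)) (fun k => (hxm k).enorm)
      (fun k => hxdom.mono fun y hy => hy k)
      (by simp [lintegral_const, ENNReal.mul_ne_top, measure_ne_top])
      (hxlim.mono fun y hy => by simpa using hy.enorm)
  have hbound : ∫⁻ x, ENNReal.ofReal (g x) * ν univ ∂μ ≠ ∞ := by
    rw [lintegral_mul_const' _ _ (measure_ne_top ν univ)]
    exact ENNReal.mul_ne_top hg.lintegral_lt_top.ne (measure_ne_top ν univ)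
  simp_rw [lintegral_prod _ (hF _).enorm]
  simpa using tendsto_lintegral_of_dominated_convergence' (f := 0) _
    (fun k => (hF k).enorm.lintegral_prod_right')
    (fun k => hdom'.mono fun x hx => (lintegral_mono_ae (hx.mono fun y hy => hy k)).trans_eq
      (lintegral_const _)) hbound hinner

theorem lintegral_Ico_tsum_comp_add_int_mul {φ : ℝ → ℝ≥0∞} (hφ : Measurable φ) {T : ℝ}
    (hT : 0 < T) (u : ℝ) :
    ∫⁻ x in Ico u (u + T), ∑' i : ℤ, φ (x + i * T) = ∫⁻ x, φ x := by
  have hpiece : ∀ i : ℤ, ∫⁻ x in Ico u (u + T), φ (x + i * T)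
      = ∫⁻ x in Ico (u + i • T) (u + (i + 1) • T), φ x := fun i => by
    rw [← (measurePreserving_add_right volume (i * T)).setLIntegral_comp_preimage_emb
      (measurableEmbedding_addRight _) φ]
    congr 2
    ext x
    simp only [mem_preimage, mem_Ico, zsmul_eq_mul, Int.cast_add, Int.cast_one]
    constructor <;> rintro ⟨h₁, h₂⟩ <;> constructor <;> linarith
  rw [lintegral_tsum (f := fun (i : ℤ) x => φ (x + i * T))
      fun i => (hφ.comp (measurable_add_const _)).aemeasurable, tsum_congr hpiece,
    ← lintegral_iUnion (fun _ => measurableSet_Ico) (pairwise_disjoint_Ico_add_zsmul u T),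
    iUnion_Ico_add_zsmul hT u, Measure.restrict_univ]

theorem lintegral_Ico_nat_mul_tsum_comp_add_int_mul {φ : ℝ → ℝ≥0∞} (hφ : Measurable φ) {T : ℝ}
    (hT : 0 < T) (u : ℝ) (m : ℕ) :
    ∫⁻ x in Ico u (u + m * T), ∑' i : ℤ, φ (x + i * T) = m * ∫⁻ x, φ x := by
  induction m with
  | zero => simp
  | succ m ih =>
    have hmT : 0 ≤ (m : ℝ) * T := by positivity
    rw [Nat.cast_succ, add_one_mul, ← add_assoc,
      ← Ico_union_Ico_eq_Ico (b := u + m * T) (by linarith) (by linarith),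
      lintegral_union measurableSet_Ico Ico_disjoint_Ico_same, ih,
      lintegral_Ico_tsum_comp_add_int_mul hφ hT, Nat.cast_succ, add_one_mul]

theorem lintegral_Icc_tsum_comp_add_int_mul_le {φ : ℝ → ℝ≥0∞} (hφ : Measurable φ) {T : ℝ}
    (hT : 0 < T) (a b : ℝ) :
    ∫⁻ x in Icc a b, ∑' i : ℤ, φ (x + i * T) ≤ (⌊(b - a) / T⌋₊ + 1 : ℕ) * ∫⁻ x, φ x := by
  rw [← lintegral_Ico_nat_mul_tsum_comp_add_int_mul hφ hT a]
  refine lintegral_mono_set fun x hx => ⟨hx.1, hx.2.trans_lt ?_⟩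
  have := (div_lt_iff₀ hT).1 (Nat.lt_floor_add_one ((b - a) / T))
  push_cast
  linarith

theorem measurePreserving_add_right_fst {G β : Type*} [MeasurableSpace G] [AddGroup G]
    [MeasurableAdd G] [MeasurableSpace β] (μ : Measure G) [μ.IsAddRightInvariant] [SFinite μ]
    (ν : Measure β) [SFinite ν] (c : G) :
    MeasurePreserving (fun p : G × β => (p.1 + c, p.2)) (μ.prod ν) (μ.prod ν) :=
  (measurePreserving_add_right μ c).prod (MeasurePreserving.id ν)

section Periodization

variable {β : Type*} [MeasurableSpace β] {ν : Measure β} [SFinite ν]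

theorem lintegral_prod_tsum_comp_add_int_mul_le {φ : ℝ × β → ℝ≥0∞} (hφ : Measurable φ)
    {T : ℝ} (hT : 0 < T) (a b : ℝ) :
    ∫⁻ p, ∑' i : ℤ, φ (p.1 + i * T, p.2) ∂(volume.restrict (Icc a b)).prod ν
      ≤ (⌊(b - a) / T⌋₊ + 1 : ℕ) * ∫⁻ p, φ p ∂(volume.prod ν) := by
  have hsum : Measurable fun p : ℝ × β => ∑' i : ℤ, φ (p.1 + i * T, p.2) :=
    Measurable.tsum fun i => hφ.comp ((measurable_fst.add_const _).prodMk measurable_snd)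
  rw [lintegral_prod_symm _ hsum.aemeasurable, lintegral_prod_symm _ hφ.aemeasurable,
    ← lintegral_const_mul _ hφ.lintegral_prod_left']
  exact lintegral_mono fun y =>
    lintegral_Icc_tsum_comp_add_int_mul_le (hφ.comp measurable_prodMk_right) hT a b

theorem lintegral_prod_tsum_comp_add_int_mul_le' {φ : ℝ × β → ℝ≥0∞}
    (hφ : AEMeasurable φ (volume.prod ν)) {T : ℝ} (hT : 0 < T) (a b : ℝ) :
    ∫⁻ p, ∑' i : ℤ, φ (p.1 + i * T, p.2) ∂(volume.restrict (Icc a b)).prod ν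
      ≤ (⌊(b - a) / T⌋₊ + 1 : ℕ) * ∫⁻ p, φ p ∂(volume.prod ν) := by
  have hac : (volume.restrict (Icc a b)).prod ν ≪ volume.prod ν :=
    Measure.restrict_le_self.absolutelyContinuous.prod (Measure.AbsolutelyContinuous.refl ν)
  have hshift : ∀ᵐ p ∂(volume.restrict (Icc a b)).prod ν,
      ∀ i : ℤ, φ (p.1 + i * T, p.2) = hφ.mk φ (p.1 + i * T, p.2) :=
    hac (ae_all_iff.2 fun i => (measurePreserving_add_right_fst volume ν _
      ).quasiMeasurePreserving.ae_eq_comp hφ.ae_eq_mk)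
  calc ∫⁻ p, ∑' i : ℤ, φ (p.1 + i * T, p.2) ∂(volume.restrict (Icc a b)).prod ν
      = ∫⁻ p, ∑' i : ℤ, hφ.mk φ (p.1 + i * T, p.2) ∂(volume.restrict (Icc a b)).prod ν :=
        lintegral_congr_ae (hshift.mono fun p hp => tsum_congr hp)
    _ ≤ (⌊(b - a) / T⌋₊ + 1 : ℕ) * ∫⁻ p, hφ.mk φ p ∂(volume.prod ν) :=
        lintegral_prod_tsum_comp_add_int_mul_le hφ.measurable_mk hT a b
    _ = (⌊(b - a) / T⌋₊ + 1 : ℕ) * ∫⁻ p, φ p ∂(volume.prod ν) := by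
        rw [lintegral_congr_ae hφ.ae_eq_mk]

end Periodization

section RiemannSum

variable {β E : Type*} [NormedAddCommGroup E]

noncomputable def normRiemannSum (F : ℝ × β → E) (k : ℕ) (p : ℝ × β) : ℝ :=
  (k : ℝ)⁻¹ * ∑' i : ℤ, ‖F (p.1 + i / k, p.2)‖

theorem normRiemannSum_eq_toReal (F : ℝ × β → E) (k : ℕ) (p : ℝ × β) :
    normRiemannSum F k p = (k : ℝ)⁻¹ * (∑' i : ℤ, ‖F (p.1 + i * (k : ℝ)⁻¹, p.2)‖ₑ).toReal := by
  rw [normRiemannSum, ENNReal.tsum_toReal_eq fun _ => enorm_ne_top]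
  simp only [toReal_enorm, div_eq_mul_inv]

variable [MeasurableSpace β] {ν : Measure β} [SFinite ν]

theorem MeasureTheory.AEStronglyMeasurable.normRiemannSum {F : ℝ × β → E}
    (hF : AEStronglyMeasurable F (volume.prod ν)) (k : ℕ) :
    AEStronglyMeasurable (normRiemannSum F k) (volume.prod ν) := by
  have hterm : ∀ i : ℤ, AEMeasurable (fun p : ℝ × β => ‖F (p.1 + i * (k : ℝ)⁻¹, p.2)‖ₑ)
      (volume.prod ν) := fun i =>
    (hF.comp_quasiMeasurePreserving
      (measurePreserving_add_right_fst volume ν _).quasiMeasurePreserving).enorm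
  rw [funext (normRiemannSum_eq_toReal F k)]
  exact (aemeasurable_const.mul (AEMeasurable.tsum hterm).ennreal_toReal).aestronglyMeasurable

theorem lintegral_enorm_normRiemannSum_le {F : ℝ × β → E}
    (hF : AEStronglyMeasurable F (volume.prod ν)) {a b : ℝ} (hab : a ≤ b) {k : ℕ} (hk : k ≠ 0) :
    ∫⁻ p, ‖normRiemannSum F k p‖ₑ ∂(volume.restrict (Icc a b)).prod ν
      ≤ ENNReal.ofReal (b - a + 1) * ∫⁻ p, ‖F p‖ₑ ∂(volume.prod ν) := by
  have hk₁ : (1 : ℝ) ≤ k := Nat.one_le_cast.2 (Nat.pos_of_ne_zero hk)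
  have hpoint : ∀ p, ‖normRiemannSum F k p‖ₑ
      ≤ ENNReal.ofReal (k : ℝ)⁻¹ * ∑' i : ℤ, ‖F (p.1 + i * (k : ℝ)⁻¹, p.2)‖ₑ := fun p => by
    rw [normRiemannSum_eq_toReal, enorm_mul, Real.enorm_of_nonneg (by positivity),
      Real.enorm_of_nonneg ENNReal.toReal_nonneg]
    gcongr
    exact ENNReal.ofReal_toReal_le
  have hconst : ENNReal.ofReal (k : ℝ)⁻¹ * (⌊(b - a) / (k : ℝ)⁻¹⌋₊ + 1 : ℕ)
      ≤ ENNReal.ofReal (b - a + 1) := by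
    rw [← ENNReal.ofReal_natCast, ← ENNReal.ofReal_mul (by positivity)]
    refine ENNReal.ofReal_le_ofReal ?_
    have hfloor :=
      Nat.floor_le (div_nonneg (sub_nonneg.2 hab) (by positivity : (0 : ℝ) ≤ (k : ℝ)⁻¹))
    rw [div_inv_eq_mul] at hfloor ⊢
    have hkinv : (k : ℝ)⁻¹ ≤ 1 := inv_le_one_of_one_le₀ hk₁
    push_cast
    calc (k : ℝ)⁻¹ * (⌊(b - a) * k⌋₊ + 1) = (k : ℝ)⁻¹ * ⌊(b - a) * k⌋₊ + (k : ℝ)⁻¹ := by ring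
      _ ≤ (k : ℝ)⁻¹ * ((b - a) * k) + 1 := by gcongr
      _ = b - a + 1 := by field_simp
  calc ∫⁻ p, ‖normRiemannSum F k p‖ₑ ∂(volume.restrict (Icc a b)).prod ν
      ≤ ∫⁻ p, ENNReal.ofReal (k : ℝ)⁻¹ * ∑' i : ℤ, ‖F (p.1 + i * (k : ℝ)⁻¹, p.2)‖ₑ
          ∂(volume.restrict (Icc a b)).prod ν := lintegral_mono hpoint
    _ = ENNReal.ofReal (k : ℝ)⁻¹ * ∫⁻ p, ∑' i : ℤ, ‖F (p.1 + i * (k : ℝ)⁻¹, p.2)‖ₑ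
          ∂(volume.restrict (Icc a b)).prod ν := lintegral_const_mul' _ _ ENNReal.ofReal_ne_top
    _ ≤ ENNReal.ofReal (k : ℝ)⁻¹ * ((⌊(b - a) / (k : ℝ)⁻¹⌋₊ + 1 : ℕ)
          * ∫⁻ p, ‖F p‖ₑ ∂(volume.prod ν)) := by
        gcongr
        exact lintegral_prod_tsum_comp_add_int_mul_le' hF.enorm (by positivity) a b
    _ ≤ ENNReal.ofReal (b - a + 1) * ∫⁻ p, ‖F p‖ₑ ∂(volume.prod ν) := by
        rw [← mul_assoc]
        gcongr

theorem tendsto_lintegral_enorm_normRiemannSum {F : ℕ → ℝ × β → E}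
    (hF : ∀ k, AEStronglyMeasurable (F k) (volume.prod ν)) {a b : ℝ} (hab : a ≤ b)
    (hF0 : Tendsto (fun k => ∫⁻ p, ‖F k p‖ₑ ∂(volume.prod ν)) atTop (𝓝 0)) :
    Tendsto (fun k => ∫⁻ p, ‖normRiemannSum (F k) k p‖ₑ ∂(volume.restrict (Icc a b)).prod ν)
      atTop (𝓝 0) := by
  have hbound : Tendsto (fun k => ENNReal.ofReal (b - a + 1) * ∫⁻ p, ‖F k p‖ₑ ∂(volume.prod ν))
      atTop (𝓝 0) := by
    simpa using ENNReal.Tendsto.const_mul hF0 (Or.inr ENNReal.ofReal_ne_top)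
  refine tendsto_of_tendsto_of_tendsto_of_le_of_le' tendsto_const_nhds hbound
    (Eventually.of_forall fun _ => zero_le) ?_
  filter_upwards [eventually_ne_atTop 0] with k hk
  exact lintegral_enorm_normRiemannSum_le (hF k) hab hk

end RiemannSum

theorem riemann_sums_two_parameters_general (X : Type*) [NormedAddCommGroup X]
    (a b c d : ℝ) (hab : a ≤ b)
    (f : ℕ → ℝ × ℝ → X)
    (hint : ∀ k, Integrable (f k))
    (hsupp : ∀ k, ∀ p : ℝ × ℝ, p ∉ Set.Icc a b ×ˢ Set.Icc c d → f k p = 0)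
    (hconv : ∀ᵐ t ∂(volume.restrict (Set.Icc a b)),
      ∀ᵐ z₂ ∂(volume.restrict (Set.Icc c d)),
        Tendsto (fun k : ℕ => f k (t, z₂)) atTop (𝓝 0))
    (g : ℝ → ℝ) (hg : Integrable g)
    (hdom : ∀ᵐ t ∂(volume.restrict (Set.Icc a b)),
      ∀ᵐ z₂ ∂(volume.restrict (Set.Icc c d)), ∀ k : ℕ, ‖f k (t, z₂)‖ ≤ g t) :
    ∃ N ⊆ Set.Icc a b ×ˢ Set.Icc c d, volume N = 0 ∧ ∃ K : Set ℕ, K.Infinite ∧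
      (∀ p ∈ (Set.Icc a b ×ˢ Set.Icc c d) \ N,
        Tendsto
          (fun k : ℕ => (k : ℝ)⁻¹ * ∑' i : ℤ, ‖f k (p.1 + (i : ℝ) / k, p.2)‖)
          (atTop ⊓ 𝓟 K) (𝓝 0)) ∧
      ∀ ε : ℝ, 0 < ε → ∃ Aε ⊆ Set.Icc a b ×ˢ Set.Icc c d, MeasurableSet Aε ∧
        volume ((Set.Icc a b ×ˢ Set.Icc c d) \ Aε) ≤ ENNReal.ofReal ε ∧
        TendstoUniformlyOn
          (fun (k : ℕ) (p : ℝ × ℝ) =>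
            (k : ℝ)⁻¹ * ∑' i : ℤ, ‖f k (p.1 + (i : ℝ) / k, p.2)‖)
          (fun _ => 0) (atTop ⊓ 𝓟 K) Aε := by
  set ν := volume.restrict (Icc c d)
  have hμ : volume.restrict (Icc a b ×ˢ Icc c d) = (volume.restrict (Icc a b)).prod ν := by
    rw [Measure.volume_eq_prod, Measure.prod_restrict]
  have hmeas : ∀ k, AEStronglyMeasurable (f k) (volume.prod ν) := fun k =>
    (hint k).1.mono_ac (Measure.volume_eq_prod ℝ ℝ ▸
      (Measure.AbsolutelyContinuous.refl _).prod Measure.restrict_le_self.absolutelyContinuous)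
  have hmass : ∀ k, ∫⁻ p, ‖f k p‖ₑ ∂(volume.prod ν)
      = ∫⁻ p, ‖f k p‖ₑ ∂(volume.restrict (Icc a b)).prod ν := fun k => by
    rw [← setLIntegral_eq_of_support_subset (s := Icc a b ×ˢ Icc c d), ← Measure.prod_restrict,
      Measure.restrict_restrict_of_subset subset_rfl]
    exact fun p hp => not_not.1 fun h => hp (by simp [hsupp k p h])
  have hL1 := tendsto_lintegral_enorm_normRiemannSum hmeas hab <| by
    simp_rw [hmass]
    exact tendsto_lintegral_enorm_prod_of_ae_ae (fun k => hμ ▸ (hint k).1.restrict) hconv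
      hg.integrableOn hdom
  have hR : ∀ k, AEStronglyMeasurable (normRiemannSum (f k) k)
      (volume.restrict (Icc a b ×ˢ Icc c d)) := fun k => by
    rw [hμ]
    exact ((hmeas k).normRiemannSum k).mono_ac
      (Measure.restrict_le_self.absolutelyContinuous.prod (Measure.AbsolutelyContinuous.refl ν))
  have hRμ : TendstoInMeasure (volume.restrict (Icc a b ×ˢ Icc c d))
      (fun k => normRiemannSum (f k) k) atTop 0 := by
    refine tendstoInMeasure_of_tendsto_eLpNorm one_ne_zero hR aestronglyMeasurable_const ?_
    rw [hμ]
    simpa [eLpNorm_one_eq_lintegral_enorm] using hL1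
  exact hRμ.exists_infinite_tendsto_ae_tendstoUniformlyOn
    (measurableSet_Icc.prod measurableSet_Icc) (isCompact_Icc.prod isCompact_Icc).measure_lt_top.ne
    hR stronglyMeasurable_const

/-- Riemann sums of a sequence of functions converging to `0` in `L¹`, with an
    additional parameter: for Bochner integrable `f_k : ℝ × ℝ → X` vanishing
    outside `I × J = [a,b] × [c,d]`, converging pointwise a.e. to `0` and
    dominated by an integrable `g`, there are a null set `N ⊆ I × J` and an
    infinite `K ⊆ ℕ` such that `(1/k) ∑_{i∈ℤ} ‖f_k(z₁ + i/k, z₂)‖ → 0` along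
    `k ∈ K` for every `(z₁,z₂) ∈ (I×J) \ N`; moreover for every `ε > 0` the
    convergence is uniform on a Borel set `Aε ⊆ I × J` with
    `ℒ²((I×J) \ Aε) ≤ ε`. -/
theorem riemann_sums_two_parameters (X : Type*) [NormedAddCommGroup X]
    [NormedSpace ℝ X] [CompleteSpace X]
    (a b c d : ℝ) (hab : a ≤ b) (hcd : c ≤ d)
    (f : ℕ → ℝ × ℝ → X)
    (hint : ∀ k, Integrable (f k))
    (hsupp : ∀ k, ∀ p : ℝ × ℝ, p ∉ Set.Icc a b ×ˢ Set.Icc c d → f k p = 0)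
    (hconv : ∀ᵐ t ∂(volume.restrict (Set.Icc a b)),
      ∀ᵐ z₂ ∂(volume.restrict (Set.Icc c d)),
        Tendsto (fun k : ℕ => f k (t, z₂)) atTop (𝓝 0))
    (g : ℝ → ℝ) (hg : Integrable g) (hg0 : ∀ t, 0 ≤ g t)
    (hdom : ∀ᵐ t ∂(volume.restrict (Set.Icc a b)),
      ∀ᵐ z₂ ∂(volume.restrict (Set.Icc c d)), ∀ k : ℕ, ‖f k (t, z₂)‖ ≤ g t) :
    ∃ N ⊆ Set.Icc a b ×ˢ Set.Icc c d, volume N = 0 ∧ ∃ K : Set ℕ, K.Infinite ∧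
      (∀ p ∈ (Set.Icc a b ×ˢ Set.Icc c d) \ N,
        Tendsto
          (fun k : ℕ => (k : ℝ)⁻¹ * ∑' i : ℤ, ‖f k (p.1 + (i : ℝ) / k, p.2)‖)
          (atTop ⊓ 𝓟 K) (𝓝 0)) ∧
      ∀ ε : ℝ, 0 < ε → ∃ Aε ⊆ Set.Icc a b ×ˢ Set.Icc c d, MeasurableSet Aε ∧
        volume ((Set.Icc a b ×ˢ Set.Icc c d) \ Aε) ≤ ENNReal.ofReal ε ∧
        TendstoUniformlyOn
          (fun (k : ℕ) (p : ℝ × ℝ) =>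
            (k : ℝ)⁻¹ * ∑' i : ℤ, ‖f k (p.1 + (i : ℝ) / k, p.2)‖)
          (fun _ => 0) (atTop ⊓ 𝓟 K) Aε :=
  riemann_sums_two_parameters_general X a b c d hab f hint hsupp hconv g hg hdom
end
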